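/- Let X and Y be nonzero real or complex Banach spaces. If the direct sum X ⊕_1 Y (the product X × Y with the norm ‖(x, y)‖ = ‖x‖ + ‖y‖) is lush, then both X and Y are lush. -/

import Mathlib

open scoped BigOperators

/-- The open slice `S(B_X, f, α) = {x ∈ B_X : Re f(x) > 1 - α}` of the closed unit ball. -/
def Slice (𝕜 : Type*) {X : Type*} [RCLike 𝕜] [NormedAddCommGroup X] [NormedSpace 𝕜 X]
    (f : X →L[𝕜] 𝕜) (α : ℝ) : Set X :=
  {x | ‖x‖ ≤ 1 ∧ 1 - α < RCLike.re (f x)}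

/-- The convex hull of `𝕋 · S(B_X, f, α)`, i.e. all convex combinations of rotated points of
the slice `S(B_X, f, α)`. -/
def ConvRotSlice (𝕜 : Type*) {X : Type*} [RCLike 𝕜] [NormedAddCommGroup X] [NormedSpace 𝕜 X]
    (f : X →L[𝕜] 𝕜) (α : ℝ) : Set X :=
  {x | ∃ (n : ℕ) (t : Fin n → ℝ) (ω : Fin n → 𝕜) (s : Fin n → X),
    (∀ k, 0 ≤ t k) ∧ (∑ k, t k) = 1 ∧ (∀ k, ‖ω k‖ = 1) ∧ (∀ k, s k ∈ Slice 𝕜 f α) ∧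
    x = ∑ k, ((t k : 𝕜) * ω k) • s k}

/-- A Banach space `X` over `𝕜 = ℝ` or `ℂ` is *lush* if for all `u, v` in the unit sphere and
every `ε > 0` there is a norm-one functional `f` with `u ∈ S(B_X, f, ε)` and
`dist(v, conv(𝕋 · S(B_X, f, ε))) < ε`. -/
def IsLush (𝕜 X : Type*) [RCLike 𝕜] [NormedAddCommGroup X] [NormedSpace 𝕜 X] : Prop :=
  ∀ u v : X, ‖u‖ = 1 → ‖v‖ = 1 → ∀ ε : ℝ, 0 < ε →
    ∃ f : X →L[𝕜] 𝕜, ‖f‖ = 1 ∧ u ∈ Slice 𝕜 f ε ∧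
      Metric.infDist v (ConvRotSlice 𝕜 f ε) < ε

/-!
Given unit vectors `u, v ∈ X`, apply lushness of `X ⊕₁ Y` to `(u, 0)` and `(v, 0)` with a
small `δ`, obtaining a functional `F`. Collapsing a point `(x, y)` of the slice of `F` to
`x + ‖y‖ u` keeps it in the unit ball of `X` and in the slice of width `2δ` of the restriction
`g = F(·, 0)`, since `Re F(u, 0) > 1 - δ`. If `w = ∑ tₖ ωₖ (xₖ, yₖ)` is a rotated convex
combination with `‖v - w.fst‖ < δ`, collapsing moves `w.fst` by at most
`∑ tₖ ‖yₖ‖ ≤ 1 - ‖w.fst‖ ≤ ‖v - w.fst‖`, so `v` is within `2δ` of `conv(𝕋 · S(B_X, g, 2δ))`.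
Rescaling `g` to norm one only enlarges its slices of width at most one. The statement for
`Y` follows through the isometry `X ⊕₁ Y ≃ Y ⊕₁ X`.
-/

open Metric

section Slice

variable {𝕜 X : Type*} [RCLike 𝕜] [NormedAddCommGroup X] [NormedSpace 𝕜 X]

lemma slice_mono {f : X →L[𝕜] 𝕜} {α β : ℝ} (h : α ≤ β) : Slice 𝕜 f α ⊆ Slice 𝕜 f β :=
  fun _ hx => ⟨hx.1, by linarith [hx.2]⟩

lemma slice_subset_convRotSlice (f : X →L[𝕜] 𝕜) (α : ℝ) : Slice 𝕜 f α ⊆ ConvRotSlice 𝕜 f α :=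
  fun x hx => ⟨1, fun _ => 1, fun _ => 1, fun _ => x, fun _ => zero_le_one, by simp,
    fun _ => by simp, fun _ => hx, by simp⟩

lemma convRotSlice_mono {f g : X →L[𝕜] 𝕜} {α β : ℝ} (h : Slice 𝕜 f α ⊆ Slice 𝕜 g β) :
    ConvRotSlice 𝕜 f α ⊆ ConvRotSlice 𝕜 g β := by
  rintro _ ⟨n, t, ω, s, ht, hsum, hω, hs, rfl⟩
  exact ⟨n, t, ω, s, ht, hsum, hω, fun k => h (hs k), rfl⟩

lemma mapsTo_convRotSlice {Z : Type*} [NormedAddCommGroup Z] [NormedSpace 𝕜 Z]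
    {f : X →L[𝕜] 𝕜} {g : Z →L[𝕜] 𝕜} {α β : ℝ} (T : X →L[𝕜] Z)
    (h : Set.MapsTo T (Slice 𝕜 f α) (Slice 𝕜 g β)) :
    Set.MapsTo T (ConvRotSlice 𝕜 f α) (ConvRotSlice 𝕜 g β) := by
  rintro _ ⟨n, t, ω, s, ht, hsum, hω, hs, rfl⟩
  exact ⟨n, t, ω, T ∘ s, ht, hsum, hω, fun k => h (hs k), by simp [map_sum, map_smul]⟩

lemma exists_norm_eq_one_slice_subset {g : X →L[𝕜] 𝕜} (hg : ‖g‖ ≤ 1) {α : ℝ} (hα : α ≤ 1)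
    (hne : (Slice 𝕜 g α).Nonempty) : ∃ f : X →L[𝕜] 𝕜, ‖f‖ = 1 ∧ Slice 𝕜 g α ⊆ Slice 𝕜 f α := by
  obtain ⟨x, hx, hgx⟩ := hne
  have hg_pos : 0 < ‖g‖ := by
    calc 0 ≤ 1 - α := by linarith
      _ < RCLike.re (g x) := hgx
      _ ≤ ‖g x‖ := RCLike.re_le_norm _
      _ ≤ ‖g‖ * ‖x‖ := g.le_opNorm x
      _ ≤ ‖g‖ := mul_le_of_le_one_right (norm_nonneg g) hx
  refine ⟨((‖g‖⁻¹ : ℝ) : 𝕜) • g, ?_, fun y hy => ⟨hy.1, ?_⟩⟩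
  · rw [norm_smul, RCLike.norm_ofReal, abs_of_pos (inv_pos.mpr hg_pos),
      inv_mul_cancel₀ hg_pos.ne']
  · rw [smul_apply, smul_eq_mul, RCLike.re_ofReal_mul]
    exact hy.2.trans_le <| le_mul_of_one_le_left (by linarith [hy.2]) (one_le_inv₀ hg_pos |>.mpr hg)

end Slice

theorem IsLush.of_linearIsometryEquiv {𝕜 Z W : Type*} [RCLike 𝕜] [NormedAddCommGroup Z]
    [NormedSpace 𝕜 Z] [NormedAddCommGroup W] [NormedSpace 𝕜 W] (e : Z ≃ₗᵢ[𝕜] W)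
    (h : IsLush 𝕜 Z) : IsLush 𝕜 W := by
  intro u v hu hv ε hε
  obtain ⟨f, hf, huf, hvf⟩ := h (e.symm u) (e.symm v) (by simpa using hu) (by simpa using hv) ε hε
  have he : Set.MapsTo (e : Z →L[𝕜] W) (Slice 𝕜 f ε) (Slice 𝕜 (f.comp (e.symm : W →L[𝕜] Z)) ε) :=
    fun x hx => ⟨by simpa using hx.1, by simpa using hx.2⟩
  refine ⟨f.comp (e.symm : W →L[𝕜] Z), by rw [f.opNorm_comp_linearIsometryEquiv, hf],
    by simpa using he huf, ?_⟩
  obtain ⟨w, hw, hvw⟩ := (infDist_lt_iff ⟨_, slice_subset_convRotSlice f ε huf⟩).mp hvf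
  calc infDist v _ ≤ dist v (e w) := infDist_le_dist_of_mem (mapsTo_convRotSlice _ he hw)
    _ = dist (e.symm v) w := by rw [← e.dist_map, e.apply_symm_apply]
    _ < ε := hvw

section WithLpProd

variable {𝕜 X Y : Type*} [RCLike 𝕜] [NormedAddCommGroup X] [NormedSpace 𝕜 X]
  [NormedAddCommGroup Y]

variable (𝕜) in
noncomputable def collapseSnd (u : X) (z : WithLp 1 (X × Y)) : X :=
  z.fst + ((‖z.snd‖ : ℝ) : 𝕜) • u

lemma norm_collapseSnd_le {u : X} (hu : ‖u‖ ≤ 1) (z : WithLp 1 (X × Y)) :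
    ‖collapseSnd 𝕜 u z‖ ≤ ‖z‖ :=
  calc ‖collapseSnd 𝕜 u z‖ ≤ ‖z.fst‖ + ‖z.snd‖ * ‖u‖ := by
        simpa [collapseSnd, norm_smul] using norm_add_le z.fst (((‖z.snd‖ : ℝ) : 𝕜) • u)
    _ ≤ ‖z.fst‖ + ‖z.snd‖ := by gcongr; exact mul_le_of_le_one_right (norm_nonneg _) hu
    _ = ‖z‖ := (WithLp.prod_norm_eq_of_L1 z).symm

variable [NormedSpace 𝕜 Y]

variable (𝕜 X Y) in
noncomputable def WithLp.inlₗᵢ (p : ENNReal) [Fact (1 ≤ p)] : X →ₗᵢ[𝕜] WithLp p (X × Y) where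
  toLinearMap := (WithLp.linearEquiv p 𝕜 (X × Y)).symm.toLinearMap ∘ₗ LinearMap.inl 𝕜 X Y
  norm_map' := WithLp.norm_toLp_fst p X Y

@[simp]
lemma WithLp.inlₗᵢ_apply (p : ENNReal) [Fact (1 ≤ p)] (x : X) :
    WithLp.inlₗᵢ 𝕜 X Y p x = WithLp.toLp p (x, 0) :=
  rfl

lemma re_sub_re_apply_inl_fst_le {F : WithLp 1 (X × Y) →L[𝕜] 𝕜} (hF : ‖F‖ ≤ 1)
    (z : WithLp 1 (X × Y)) :
    RCLike.re (F z) - RCLike.re (F (WithLp.toLp 1 (z.fst, 0))) ≤ ‖z.snd‖ :=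
  calc RCLike.re (F z) - RCLike.re (F (WithLp.toLp 1 (z.fst, 0)))
      = RCLike.re (F (WithLp.toLp 1 (0, z.snd))) := by
        rw [← map_sub, ← map_sub]; congr 2; rw [WithLp.ext_iff]; ext <;> simp
    _ ≤ ‖F (WithLp.toLp 1 (0, z.snd))‖ := RCLike.re_le_norm _
    _ ≤ ‖WithLp.toLp 1 ((0 : X), z.snd)‖ := F.le_of_opNorm_le hF _ |>.trans_eq (one_mul _)
    _ = ‖z.snd‖ := WithLp.norm_toLp_snd 1 X Y z.snd

lemma collapseSnd_mem_slice {F : WithLp 1 (X × Y) →L[𝕜] 𝕜} (hF : ‖F‖ ≤ 1) {u : X}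
    (hu : ‖u‖ ≤ 1) {δ : ℝ} (hδ : 0 ≤ δ) (huF : 1 - δ < RCLike.re (F (WithLp.toLp 1 (u, 0))))
    {z : WithLp 1 (X × Y)} (hz : z ∈ Slice 𝕜 F δ) :
    collapseSnd 𝕜 u z ∈ Slice 𝕜 (F.comp (WithLp.inlₗᵢ 𝕜 X Y 1).toContinuousLinearMap) (2 * δ) := by
  refine ⟨(norm_collapseSnd_le hu z).trans hz.1, ?_⟩
  have hsnd : ‖z.snd‖ ≤ 1 := (WithLp.norm_snd_le _ z).trans hz.1
  have hfst := re_sub_re_apply_inl_fst_le hF z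
  rw [ContinuousLinearMap.comp_apply, LinearIsometry.coe_toContinuousLinearMap, collapseSnd,
    map_add, map_smul, map_add, map_smul, smul_eq_mul, map_add, RCLike.re_ofReal_mul]
  simp only [WithLp.inlₗᵢ_apply]
  nlinarith [hz.2, norm_nonneg z.snd]

lemma norm_fst_sum_sub_sum_collapseSnd_le {n : ℕ} {t : Fin n → ℝ} {ω : Fin n → 𝕜}
    {s : Fin n → WithLp 1 (X × Y)} (ht : ∀ k, 0 ≤ t k) (hsum : ∑ k, t k = 1)
    (hω : ∀ k, ‖ω k‖ = 1) (hs : ∀ k, ‖s k‖ ≤ 1) {u : X} (hu : ‖u‖ ≤ 1) :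
    ‖(∑ k, ((t k : 𝕜) * ω k) • s k).fst - ∑ k, ((t k : 𝕜) * ω k) • collapseSnd 𝕜 u (s k)‖ ≤
      1 - ‖(∑ k, ((t k : 𝕜) * ω k) • s k).fst‖ := by
  have hc : ∀ k, ‖(t k : 𝕜) * ω k‖ = t k := fun k => by
    rw [norm_mul, hω, mul_one, RCLike.norm_ofReal, abs_of_nonneg (ht k)]
  have hfst : (∑ k, ((t k : 𝕜) * ω k) • s k).fst = ∑ k, ((t k : 𝕜) * ω k) • (s k).fst :=
    map_sum (WithLp.fstₗ 1 𝕜 X Y) _ _ |>.trans <| by simp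
  have hsplit : ∀ k, ‖(s k).fst‖ + ‖(s k).snd‖ ≤ 1 := fun k =>
    (WithLp.prod_norm_eq_of_L1 (s k)).symm.trans_le (hs k)
  rw [hfst]
  calc ‖∑ k, ((t k : 𝕜) * ω k) • (s k).fst - ∑ k, ((t k : 𝕜) * ω k) • collapseSnd 𝕜 u (s k)‖
      = ‖∑ k, ((t k : 𝕜) * ω k) • (((‖(s k).snd‖ : ℝ) : 𝕜) • u)‖ := by
        rw [← norm_neg, neg_sub, ← Finset.sum_sub_distrib]
        simp [collapseSnd, smul_add]
    _ ≤ ∑ k, t k * ‖(s k).snd‖ := by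
        refine (norm_sum_le _ _).trans (Finset.sum_le_sum fun k _ => ?_)
        rw [norm_smul, norm_smul, hc, RCLike.norm_ofReal, abs_of_nonneg (norm_nonneg _)]
        exact mul_le_mul_of_nonneg_left (mul_le_of_le_one_right (norm_nonneg _) hu) (ht k)
    _ ≤ ∑ k, t k * (1 - ‖(s k).fst‖) :=
        Finset.sum_le_sum fun k _ => mul_le_mul_of_nonneg_left (by linarith [hsplit k]) (ht k)
    _ = 1 - ∑ k, ‖((t k : 𝕜) * ω k) • (s k).fst‖ := by
        simp only [norm_smul, hc, mul_sub, mul_one, Finset.sum_sub_distrib, hsum]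
    _ ≤ 1 - ‖∑ k, ((t k : 𝕜) * ω k) • (s k).fst‖ := by gcongr; exact norm_sum_le _ _

lemma exists_mem_convRotSlice_comp_inl_dist_le {F : WithLp 1 (X × Y) →L[𝕜] 𝕜} (hF : ‖F‖ ≤ 1)
    {u : X} (hu : ‖u‖ ≤ 1) {δ : ℝ} (hδ : 0 ≤ δ)
    (huF : 1 - δ < RCLike.re (F (WithLp.toLp 1 (u, 0)))) {v : X} (hv : ‖v‖ = 1)
    {w : WithLp 1 (X × Y)} (hw : w ∈ ConvRotSlice 𝕜 F δ) :
    ∃ w' ∈ ConvRotSlice 𝕜 (F.comp (WithLp.inlₗᵢ 𝕜 X Y 1).toContinuousLinearMap) (2 * δ),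
      dist v w' ≤ 2 * dist (WithLp.toLp 1 (v, 0)) w := by
  obtain ⟨n, t, ω, s, ht, hsum, hω, hs, rfl⟩ := hw
  refine ⟨∑ k, ((t k : 𝕜) * ω k) • collapseSnd 𝕜 u (s k),
    ⟨n, t, ω, _, ht, hsum, hω, fun k => collapseSnd_mem_slice hF hu hδ huF (hs k), rfl⟩, ?_⟩
  set w := ∑ k, ((t k : 𝕜) * ω k) • s k
  have hmoved := norm_fst_sum_sub_sum_collapseSnd_le ht hsum hω (fun k => (hs k).1) hu
  have hfst : dist v w.fst ≤ dist (WithLp.toLp 1 (v, 0)) w := by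
    simpa using WithLp.dist_fst_le (WithLp.toLp 1 (v, 0)) w
  have hnorm : 1 - ‖w.fst‖ ≤ dist v w.fst := by
    rw [← hv, dist_eq_norm]; exact norm_sub_norm_le v w.fst
  calc dist v _ ≤ dist v w.fst + dist w.fst _ := dist_triangle _ _ _
    _ ≤ 2 * dist (WithLp.toLp 1 (v, 0)) w := by rw [dist_eq_norm w.fst]; linarith

end WithLpProd

theorem IsLush.fst_of_withLp_prod {𝕜 X Y : Type*} [RCLike 𝕜] [NormedAddCommGroup X]
    [NormedSpace 𝕜 X] [NormedAddCommGroup Y] [NormedSpace 𝕜 Y]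
    (h : IsLush 𝕜 (WithLp 1 (X × Y))) : IsLush 𝕜 X := by
  intro u v hu hv ε hε
  obtain ⟨δ, hδ, h2δε, h2δ1⟩ : ∃ δ : ℝ, 0 < δ ∧ 2 * δ ≤ ε ∧ 2 * δ ≤ 1 :=
    ⟨min ε 1 / 2, by positivity, by linarith [min_le_left ε 1], by linarith [min_le_right ε 1]⟩
  obtain ⟨F, hF, huF, hvF⟩ := h (WithLp.toLp 1 (u, 0)) (WithLp.toLp 1 (v, 0))
    (by simpa using hu) (by simpa using hv) δ hδ
  set g := F.comp (WithLp.inlₗᵢ 𝕜 X Y 1).toContinuousLinearMap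
  have hg : ‖g‖ ≤ 1 := (F.opNorm_comp_le _).trans <| by
    rw [hF, one_mul]; exact LinearIsometry.norm_toContinuousLinearMap_le _
  have hug : u ∈ Slice 𝕜 g (2 * δ) := slice_mono (by linarith) ⟨hu.le, huF.2⟩
  obtain ⟨f, hf, hgf⟩ := exists_norm_eq_one_slice_subset hg h2δ1 ⟨u, hug⟩
  have hsub : Slice 𝕜 g (2 * δ) ⊆ Slice 𝕜 f ε := hgf.trans (slice_mono h2δε)
  refine ⟨f, hf, hsub hug, ?_⟩
  obtain ⟨w, hw, hvw⟩ := (infDist_lt_iff ⟨_, slice_subset_convRotSlice F δ huF⟩).mp hvF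
  obtain ⟨w', hw', hvw'⟩ :=
    exists_mem_convRotSlice_comp_inl_dist_le hF.le hu.le hδ.le huF.2 hv hw
  calc infDist v _ ≤ dist v w' := infDist_le_dist_of_mem (convRotSlice_mono hsub hw')
    _ < ε := by linarith

theorem isLush_of_isLush_prod_one_general {𝕜 X Y : Type*} [RCLike 𝕜]
    [NormedAddCommGroup X] [NormedSpace 𝕜 X]
    [NormedAddCommGroup Y] [NormedSpace 𝕜 Y]
    (h : IsLush 𝕜 (WithLp 1 (X × Y))) : IsLush 𝕜 X ∧ IsLush 𝕜 Y :=
  ⟨h.fst_of_withLp_prod,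
    (h.of_linearIsometryEquiv (LinearIsometryEquiv.withLpProdComm 1 𝕜 X Y)).fst_of_withLp_prod⟩

/-- If `X ⊕_1 Y` (the product with norm `‖(x,y)‖ = ‖x‖ + ‖y‖`, i.e. `WithLp 1 (X × Y)`)
is lush, then both `X` and `Y` are lush. -/
theorem isLush_of_isLush_prod_one {𝕜 X Y : Type*} [RCLike 𝕜]
    [NormedAddCommGroup X] [NormedSpace 𝕜 X] [CompleteSpace X] [Nontrivial X]
    [NormedAddCommGroup Y] [NormedSpace 𝕜 Y] [CompleteSpace Y] [Nontrivial Y]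
    (h : IsLush 𝕜 (WithLp 1 (X × Y))) : IsLush 𝕜 X ∧ IsLush 𝕜 Y :=
  isLush_of_isLush_prod_one_general h
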